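/- There is an absolute constant C > 0 (one may take C = √(4π·ln 2)) such that the following holds: for every nondecreasing g : ℝ → ℝ with g(τ) ≥ 1 for all τ ≥ 0, every natural number N ≥ 1, and every measurable F : ℝ³ → [0,∞), one has ∫_{1 ≤ |ξ| ≤ 2^N} |ξ|·F(ξ) dξ ≤ C·√N·g(2^N)² · (∫_{ℝ³} (|ξ|⁵ / g(|ξ|)⁴)·F(ξ)² dξ)^(1/2). -/

import Mathlib

/-!
Write `|ξ| F = (g(|ξ|)² |ξ|^(-3/2)) · (|ξ|^(5/2) F / g(|ξ|)²)` and apply Cauchy–Schwarz on the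
annulus `1 ≤ |ξ| ≤ 2^N`. By monotonicity of `g`, the square of the first factor is at most
`g(2^N)⁴ |ξ|⁻³` there, and `∫ |ξ|⁻³` over the annulus is at most `N · 2³ · vol(B(0,1))`: the
annulus is covered by `N` dyadic shells `2^l ≤ |ξ| ≤ 2^(l+1)`, on each of which
`|ξ|⁻³ ≤ 2^(-3l)` while the shell lies in a ball of volume `2^(3(l+1)) vol(B(0,1))`.
-/

open MeasureTheory Real
open scoped ENNReal

theorem ENNReal.lintegral_le_sqrt_mul_sqrt_of_sq_le_mul {α : Type*} [MeasurableSpace α]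
    {μ : Measure α} {f w h : α → ℝ≥0∞} (hw : AEMeasurable w μ) (hh : AEMeasurable h μ)
    (hfwh : ∀ᵐ x ∂μ, f x ^ 2 ≤ w x * h x) :
    ∫⁻ x, f x ∂μ ≤ (∫⁻ x, w x ∂μ) ^ (1 / 2 : ℝ) * (∫⁻ x, h x ∂μ) ^ (1 / 2 : ℝ) := by
  have hsq : ∀ a : ℝ≥0∞, (a ^ (1 / 2 : ℝ)) ^ (2 : ℝ) = a := fun a => by
    rw [← ENNReal.rpow_mul]; norm_num
  calc ∫⁻ x, f x ∂μ ≤ ∫⁻ x, w x ^ (1 / 2 : ℝ) * h x ^ (1 / 2 : ℝ) ∂μ := by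
        refine lintegral_mono_ae (hfwh.mono fun x hx => ?_)
        rwa [← ENNReal.mul_rpow_of_nonneg _ _ (by norm_num),
          one_div, ENNReal.le_rpow_inv_iff two_pos, ENNReal.rpow_two]
    _ ≤ _ := by
        simpa only [Pi.mul_apply, hsq] using ENNReal.lintegral_mul_le_Lp_mul_Lq μ
          Real.HolderConjugate.two_two (hw.pow_const (1 / 2 : ℝ)) (hh.pow_const (1 / 2 : ℝ))

lemma exists_dyadic_of_one_le_of_le_two_pow {r : ℝ} {N : ℕ} (hN : 1 ≤ N) (h1 : 1 ≤ r)
    (hr : r ≤ 2 ^ N) : ∃ l < N, 2 ^ l ≤ r ∧ r ≤ 2 * 2 ^ l := by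
  induction N, hN using Nat.le_induction with
  | base => exact ⟨0, one_pos, by simpa using h1, by simpa using hr⟩
  | succ N hN ih =>
    by_cases hrN : r ≤ 2 ^ N
    · obtain ⟨l, hl, hlr⟩ := ih hrN
      exact ⟨l, hl.trans N.lt_succ_self, hlr⟩
    · exact ⟨N, N.lt_succ_self, (not_le.mp hrN).le, by rwa [← pow_succ']⟩

section
variable {E : Type*} [NormedAddCommGroup E] [NormedSpace ℝ E] [FiniteDimensional ℝ E]
  [MeasurableSpace E] [BorelSpace E] (μ : Measure E) [μ.IsAddHaarMeasure]

lemma setLIntegral_shell_inv_norm_pow_finrank_le {r : ℝ} (hr : 0 < r) :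
    ∫⁻ x in {x : E | r ≤ ‖x‖ ∧ ‖x‖ ≤ 2 * r}, ENNReal.ofReal (‖x‖ ^ Module.finrank ℝ E)⁻¹ ∂μ ≤
      2 ^ Module.finrank ℝ E * μ (Metric.ball 0 1) := by
  have hscale : (r ^ Module.finrank ℝ E)⁻¹ * (2 * r) ^ Module.finrank ℝ E =
      2 ^ Module.finrank ℝ E := by
    rw [mul_pow]; field_simp
  calc _ ≤ ∫⁻ _ in Metric.closedBall (0 : E) (2 * r),
          ENNReal.ofReal (r ^ Module.finrank ℝ E)⁻¹ ∂μ := by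
        refine (setLIntegral_mono measurable_const fun x hx => ?_).trans
          (lintegral_mono_set fun x hx => ?_)
        · gcongr
          exact hx.1
        · simpa using hx.2
    _ = 2 ^ Module.finrank ℝ E * μ (Metric.ball 0 1) := by
        rw [setLIntegral_const, Measure.addHaar_closedBall μ _ (by positivity), ← mul_assoc,
          ← ENNReal.ofReal_mul (by positivity), hscale, ENNReal.ofReal_pow zero_le_two]
        norm_num

lemma setLIntegral_annulus_inv_norm_pow_finrank_le {N : ℕ} (hN : 1 ≤ N) :
    ∫⁻ x in {x : E | 1 ≤ ‖x‖ ∧ ‖x‖ ≤ 2 ^ N}, ENNReal.ofReal (‖x‖ ^ Module.finrank ℝ E)⁻¹ ∂μ ≤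
      N * 2 ^ Module.finrank ℝ E * μ (Metric.ball 0 1) := by
  have hcover : {x : E | 1 ≤ ‖x‖ ∧ ‖x‖ ≤ 2 ^ N} ⊆
      ⋃ l : Fin N, {x : E | 2 ^ (l : ℕ) ≤ ‖x‖ ∧ ‖x‖ ≤ 2 * 2 ^ (l : ℕ)} := fun x hx => by
    obtain ⟨l, hl, hxl⟩ := exists_dyadic_of_one_le_of_le_two_pow hN hx.1 hx.2
    exact Set.mem_iUnion.mpr ⟨⟨l, hl⟩, hxl⟩
  calc _ ≤ ∑' l : Fin N, ∫⁻ x in {x : E | 2 ^ (l : ℕ) ≤ ‖x‖ ∧ ‖x‖ ≤ 2 * 2 ^ (l : ℕ)},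
          ENNReal.ofReal (‖x‖ ^ Module.finrank ℝ E)⁻¹ ∂μ :=
        (lintegral_mono_set hcover).trans (lintegral_iUnion_le _ _)
    _ ≤ ∑' _ : Fin N, 2 ^ Module.finrank ℝ E * μ (Metric.ball 0 1) :=
        ENNReal.tsum_le_tsum fun l => setLIntegral_shell_inv_norm_pow_finrank_le μ (by positivity)
    _ = _ := by simp [mul_assoc]

lemma sqrt_setLIntegral_annulus_const_mul_inv_norm_pow_finrank_le {N : ℕ} (hN : 1 ≤ N)
    (G : ℝ) :
    (∫⁻ x in {x : E | 1 ≤ ‖x‖ ∧ ‖x‖ ≤ 2 ^ N},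
        ENNReal.ofReal (G ^ 4) * ENNReal.ofReal (‖x‖ ^ Module.finrank ℝ E)⁻¹ ∂μ) ^ (1 / 2 : ℝ) ≤
      ENNReal.ofReal (√(2 ^ Module.finrank ℝ E * μ.real (Metric.ball 0 1)) * √N * G ^ 2) := by
  rw [lintegral_const_mul' _ _ ENNReal.ofReal_ne_top, one_div,
    ENNReal.rpow_inv_le_iff two_pos, ENNReal.rpow_two, ← ENNReal.ofReal_pow (by positivity),
    mul_pow, mul_pow, Real.sq_sqrt (by positivity), Real.sq_sqrt N.cast_nonneg, ← pow_mul,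
    mul_comm, ENNReal.ofReal_mul (by positivity)]
  gcongr
  refine (setLIntegral_annulus_inv_norm_pow_finrank_le μ hN).trans_eq ?_
  rw [ENNReal.ofReal_mul (by positivity), ENNReal.ofReal_mul (by positivity),
    ENNReal.ofReal_pow zero_le_two, ENNReal.ofReal_ofNat, ENNReal.ofReal_natCast,
    ofReal_measureReal]
  ring

theorem setLIntegral_annulus_norm_mul_le {g : ℝ → ℝ} (hg : Monotone g)
    (hg1 : ∀ τ : ℝ, 0 ≤ τ → 1 ≤ g τ) {N : ℕ} (hN : 1 ≤ N) {F : E → ℝ} (hF : Measurable F)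
    (hF0 : ∀ ξ, 0 ≤ F ξ) :
    ∫⁻ ξ in {ξ : E | 1 ≤ ‖ξ‖ ∧ ‖ξ‖ ≤ 2 ^ N}, ENNReal.ofReal (‖ξ‖ * F ξ) ∂μ ≤
      ENNReal.ofReal (√(2 ^ Module.finrank ℝ E * μ.real (Metric.ball 0 1)) * √N * g (2 ^ N) ^ 2) *
        (∫⁻ ξ, ENNReal.ofReal (‖ξ‖ ^ (Module.finrank ℝ E + 2) / g ‖ξ‖ ^ 4 * F ξ ^ 2) ∂μ) ^
          (1 / 2 : ℝ) := by
  set d := Module.finrank ℝ E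
  set S := {ξ : E | 1 ≤ ‖ξ‖ ∧ ‖ξ‖ ≤ 2 ^ N}
  set G := g (2 ^ N)
  have hSm : MeasurableSet S :=
    (measurableSet_le measurable_const measurable_norm).inter
      (measurableSet_le measurable_norm measurable_const)
  have hgm : Measurable g := hg.measurable
  have hpointwise : ∀ ξ ∈ S, ENNReal.ofReal (‖ξ‖ * F ξ) ^ 2 ≤
      ENNReal.ofReal (G ^ 4) * ENNReal.ofReal (‖ξ‖ ^ d)⁻¹ *
        ENNReal.ofReal (‖ξ‖ ^ (d + 2) / g ‖ξ‖ ^ 4 * F ξ ^ 2) := fun ξ hξ => by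
    have hξ0 : 0 < ‖ξ‖ := one_pos.trans_le hξ.1
    have hgξ : 1 ≤ g ‖ξ‖ := hg1 _ hξ0.le
    have hreal : (‖ξ‖ * F ξ) ^ 2 ≤ G ^ 4 * (‖ξ‖ ^ d)⁻¹ * (‖ξ‖ ^ (d + 2) / g ‖ξ‖ ^ 4 * F ξ ^ 2) :=
      calc (‖ξ‖ * F ξ) ^ 2 ≤ (G / g ‖ξ‖) ^ 4 * (‖ξ‖ * F ξ) ^ 2 :=
            le_mul_of_one_le_left (sq_nonneg _)
              (one_le_pow₀ ((one_le_div (one_pos.trans_le hgξ)).mpr (hg hξ.2)))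
        _ = _ := by field_simp; ring
    rw [← ENNReal.ofReal_pow (mul_nonneg hξ0.le (hF0 ξ)), ← ENNReal.ofReal_mul (by positivity),
      ← ENNReal.ofReal_mul (by positivity)]
    exact ENNReal.ofReal_le_ofReal hreal
  calc _ ≤ (∫⁻ ξ in S, ENNReal.ofReal (G ^ 4) * ENNReal.ofReal (‖ξ‖ ^ d)⁻¹ ∂μ) ^ (1 / 2 : ℝ) *
        (∫⁻ ξ in S, ENNReal.ofReal (‖ξ‖ ^ (d + 2) / g ‖ξ‖ ^ 4 * F ξ ^ 2) ∂μ) ^ (1 / 2 : ℝ) :=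
        ENNReal.lintegral_le_sqrt_mul_sqrt_of_sq_le_mul (by fun_prop) (by fun_prop)
          ((ae_restrict_iff' hSm).mpr (.of_forall hpointwise))
    _ ≤ _ := mul_le_mul'
        (sqrt_setLIntegral_annulus_const_mul_inv_norm_pow_finrank_le μ hN G)
        (ENNReal.rpow_le_rpow (setLIntegral_le_lintegral _ _) (by norm_num))

end

/-- **middle-frequency estimate.** There is an absolute constant
`C > 0` (one may take `C = √(4π·ln 2)`) such that for every nondecreasing `g : ℝ → ℝ`
with `g ≥ 1` on `[0,∞)`, every `N ≥ 1`, and every measurable `F : ℝ³ → [0,∞)`,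
`∫_{1 ≤ |ξ| ≤ 2^N} |ξ| F(ξ) dξ ≤ C √N g(2^N)² ( ∫ (|ξ|⁵/g(|ξ|)⁴) F(ξ)² dξ )^(1/2)`. -/
theorem stmt17 :
    ∃ C : ℝ, 0 < C ∧
      ∀ (g : ℝ → ℝ), Monotone g → (∀ τ : ℝ, 0 ≤ τ → 1 ≤ g τ) →
      ∀ N : ℕ, 1 ≤ N →
      ∀ F : EuclideanSpace ℝ (Fin 3) → ℝ, Measurable F → (∀ ξ, 0 ≤ F ξ) →
        (∫⁻ ξ in {ξ : EuclideanSpace ℝ (Fin 3) | 1 ≤ ‖ξ‖ ∧ ‖ξ‖ ≤ (2:ℝ) ^ N},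
            ENNReal.ofReal (‖ξ‖ * F ξ)) ≤
          ENNReal.ofReal (C * Real.sqrt N * (g ((2:ℝ) ^ N)) ^ 2) *
            (∫⁻ ξ, ENNReal.ofReal (‖ξ‖ ^ 5 / (g ‖ξ‖) ^ 4 * (F ξ) ^ 2)) ^ (1/2 : ℝ) := by
  have hball : 0 < volume.real (Metric.ball (0 : EuclideanSpace ℝ (Fin 3)) 1) :=
    ENNReal.toReal_pos (Metric.measure_ball_pos volume _ one_pos).ne' measure_ball_lt_top.ne
  refine ⟨√(2 ^ 3 * volume.real (Metric.ball (0 : EuclideanSpace ℝ (Fin 3)) 1)), by positivity,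
    fun g hg hg1 N hN F hF hF0 => ?_⟩
  simpa only [finrank_euclideanSpace_fin] using
    setLIntegral_annulus_norm_mul_le volume hg hg1 hN hF hF0
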